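/- arXiv:1503.05295 — 8 statements merged into one kernel-verified Lean document; each statement's English description precedes it below -/
import Mathlib

section
/- Let p be a real polynomial with only simple real zeros. Then the polynomial P₁(x) = (p'(x))² − p(x)·p''(x) is strictly positive for all real x. -/
/-!
All roots of `p` are real, so `p = c ∏ₐ (X - a)` over its real roots `a`. Clearing denominators in
`-(p'/p)' = ∑ₐ (X - a)⁻²` gives `p'² - p p'' = c² ∑ₐ ∏_{b ≠ a} (X - b)²`. At a real point `x` the
summand of `a = x` (of any `a`, if `x` is not a root) is nonzero because the roots are simple.
-/

open Polynomial

namespace Polynomial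

section CommRing

variable {R : Type*} [CommRing R]

noncomputable def laguerre (p : R[X]) : R[X] :=
  derivative p ^ 2 - p * derivative (derivative p)

lemma laguerre_C_mul (c : R) (p : R[X]) : laguerre (C c * p) = C c ^ 2 * laguerre p := by
  simp only [laguerre, derivative_C_mul]
  ring

lemma laguerre_X_sub_C_mul (a : R) (p : R[X]) :
    laguerre ((X - C a) * p) = (X - C a) ^ 2 * laguerre p + p ^ 2 := by
  simp only [laguerre, derivative_mul, derivative_add, derivative_sub, derivative_X,
    derivative_C, derivative_one, derivative_zero]
  ring

lemma laguerre_multiset_prod_X_sub_C [DecidableEq R] (m : Multiset R) :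
    laguerre (m.map (X - C ·)).prod =
      (m.map fun a ↦ ((m.erase a).map (X - C ·)).prod ^ 2).sum := by
  induction m using Multiset.induction_on with
  | empty => simp [laguerre]
  | cons a m ih =>
    have hterm : ∀ b ∈ m, (((a ::ₘ m).erase b).map (X - C ·)).prod ^ 2 =
        (X - C a) ^ 2 * ((m.erase b).map (X - C ·)).prod ^ 2 := fun b hb ↦ by
      rw [Multiset.erase_cons_tail_of_mem hb, Multiset.map_cons, Multiset.prod_cons, mul_pow]
    rw [Multiset.map_cons, Multiset.prod_cons, laguerre_X_sub_C_mul, ih, Multiset.map_cons,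
      Multiset.sum_cons, Multiset.erase_cons_head, Multiset.map_congr rfl hterm,
      Multiset.sum_map_mul_left, add_comm]

lemma nodup_roots_of_isRoot_not_isRoot_derivative [IsDomain R] {p : R[X]}
    (h : ∀ x, p.IsRoot x → ¬ (derivative p).IsRoot x) : p.roots.Nodup := by
  classical
  rcases eq_or_ne p 0 with rfl | hp0
  · simp
  rw [Multiset.nodup_iff_count_le_one]
  intro x
  rw [count_roots, ← not_lt, one_lt_rootMultiplicity_iff_isRoot hp0]
  exact fun ⟨hp, hp'⟩ ↦ h x hp hp'

end CommRing

section OrderedRing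

variable {K : Type*} [CommRing K] [LinearOrder K] [IsStrictOrderedRing K]

lemma _root_.Multiset.sum_map_prod_erase_sub_sq_pos [DecidableEq K] {m : Multiset K}
    (hm : m.Nodup) (hne : m ≠ 0) (x : K) :
    0 < (m.map fun a ↦ ((m.erase a).map (x - ·)).prod ^ 2).sum := by
  obtain ⟨a, ha, hxa⟩ : ∃ a ∈ m, x ∉ m.erase a := by
    by_cases hx : x ∈ m
    · exact ⟨x, hx, hm.notMem_erase⟩
    · obtain ⟨a, ha⟩ := Multiset.exists_mem_of_ne_zero hne
      exact ⟨a, ha, fun h ↦ hx (Multiset.mem_of_mem_erase h)⟩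
  have hprod : ((m.erase a).map (x - ·)).prod ≠ 0 := by
    rw [Ne, Multiset.prod_eq_zero_iff, Multiset.mem_map]
    rintro ⟨b, hb, hxb⟩
    exact hxa (sub_eq_zero.mp hxb ▸ hb)
  exact (pow_two_pos_of_ne_zero hprod).trans_le <|
    Multiset.single_le_sum (Multiset.forall_mem_map_iff.2 fun _ _ ↦ sq_nonneg _) _
      (Multiset.mem_map_of_mem _ ha)

lemma eval_laguerre_pos {p : K[X]} (hsplit : p.Splits) (hnodup : p.roots.Nodup)
    (hdeg : p.natDegree ≠ 0) (x : K) : 0 < (laguerre p).eval x := by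
  classical
  have hp0 : p ≠ 0 := by rintro rfl; simp at hdeg
  rw [hsplit.eq_prod_roots, laguerre_C_mul, laguerre_multiset_prod_X_sub_C]
  simp only [eval_mul, eval_pow, eval_C, eval_multisetSum, eval_multiset_prod, Multiset.map_map,
    Function.comp_def, eval_sub, eval_X]
  exact mul_pos (pow_two_pos_of_ne_zero (leadingCoeff_ne_zero.mpr hp0))
    (Multiset.sum_map_prod_erase_sub_sq_pos hnodup (hsplit.roots_ne_zero hdeg) x)

end OrderedRing

lemma splits_of_forall_aeval_eq_zero_im_eq_zero {p : ℝ[X]}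
    (h : ∀ z : ℂ, aeval z p = 0 → z.im = 0) : p.Splits := by
  refine (IsAlgClosed.splits (p.map (algebraMap ℝ ℂ))).of_splits_map _ fun z hz ↦
    ⟨z.re, Complex.ext rfl ?_⟩
  have hp0 : p ≠ 0 := by rintro rfl; simp at hz
  rw [mem_roots_map hp0, ← aeval_def] at hz
  simp [h z hz]

end Polynomial

/-- Laguerre inequality: if a real polynomial `p` of degree ≥ 1 has all its complex
roots real and simple, then `(p')² - p·p'' > 0` everywhere on `ℝ`. -/
theorem laguerre_inequality (p : ℝ[X]) (hdeg : 1 ≤ p.natDegree)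
    (hreal : ∀ z : ℂ, Polynomial.aeval z p = 0 → z.im = 0)
    (hsimple : ∀ z : ℂ, Polynomial.aeval z p = 0 → Polynomial.aeval z (derivative p) ≠ 0) :
    ∀ x : ℝ, 0 < (Polynomial.eval x (derivative p))^2
      - Polynomial.eval x p * Polynomial.eval x (derivative (derivative p)) := by
  have hnodup : p.roots.Nodup := nodup_roots_of_isRoot_not_isRoot_derivative fun x hx hx' ↦
    hsimple x (by simpa [hx.eq_zero] using (ofReal_eval (K := ℂ) p x).symm)
      (by simpa [hx'.eq_zero] using (ofReal_eval (K := ℂ) (derivative p) x).symm)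
  intro x
  simpa only [laguerre, eval_sub, eval_pow, eval_mul] using
    eval_laguerre_pos (splits_of_forall_aeval_eq_zero_im_eq_zero hreal) hnodup (by omega) x
end

section
/- Let Φ_p(x,y) = |p(x+iy)|² for a complex polynomial p with real coefficients of degree k. Then Φ_p(x,y) = Σ_{i=0}^{k} P_i(x)·y^{2i}/(2i)!, where P_i(x) = Σ_{j=0}^{2i} (−1)^{i+j} C(2i,j) p^{(j)}(x) p^{(2i−j)}(x). -/
/-!
`|p(x + iy)|² = p(x + iy) p(x - iy)` is the value at `t = iy` of `F(t) = p(x + t) p(x - t)`.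
Since `F` is even, only its even Taylor coefficients `F⁽²ⁱ⁾(0) / (2i)!` survive, and
`(iy)²ⁱ = (-1)ⁱ y²ⁱ`. By the Leibniz rule
`F⁽²ⁱ⁾(0) = ∑ⱼ C(2i, j) (-1)ʲ p⁽²ⁱ⁻ʲ⁾(x) p⁽ʲ⁾(x)`, which is `(-1)ⁱ Pᵢ(x)`.
-/

open Polynomial Complex

namespace Polynomial

section CommSemiring

variable {R : Type*} [CommSemiring R]

theorem factorial_mul_coeff_eq_iterate_derivative_eval_zero (p : R[X]) (n : ℕ) :
    (n.factorial : R) * p.coeff n = (derivative^[n] p).eval 0 := by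
  rw [← coeff_zero_eq_eval_zero, coeff_iterate_derivative, zero_add, Nat.descFactorial_self,
    nsmul_eq_mul]

theorem iterate_derivative_comp_X_add_C (p : R[X]) (c : R) (k : ℕ) :
    derivative^[k] (p.comp (X + C c)) = (derivative^[k] p).comp (X + C c) := by
  induction k generalizing p with
  | zero => rfl
  | succ k ih => simp [ih (derivative p), derivative_comp]

theorem expand_contract_of_coeff_eq_zero {q : ℕ} (hq : q ≠ 0) {f : R[X]}
    (hf : ∀ n, ¬ q ∣ n → f.coeff n = 0) : expand R q (contract q f) = f := by
  ext n
  rw [coeff_expand (Nat.pos_of_ne_zero hq), coeff_contract hq]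
  split_ifs with h
  · rw [Nat.div_mul_cancel h]
  · exact (hf n h).symm

end CommSemiring

section CommRing

variable {R : Type*} [CommRing R]

theorem iterate_derivative_comp_C_sub_X (p : R[X]) (c : R) (k : ℕ) :
    derivative^[k] (p.comp (C c - X)) = (-1) ^ k * (derivative^[k] p).comp (C c - X) := by
  induction k generalizing p with
  | zero => simp
  | succ k ih => simp [ih (derivative p), derivative_comp, pow_succ]

theorem coeff_eq_zero_of_comp_neg_X_eq_self [IsAddTorsionFree R] {f : R[X]}
    (hf : f.comp (-X) = f) {n : ℕ} (hn : Odd n) : f.coeff n = 0 := by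
  have := congrArg (coeff · n) hf
  simp only [← neg_one_mul (X : R[X]), ← C_1, ← C_neg, comp_C_mul_X_coeff, hn.neg_one_pow] at this
  exact self_eq_neg.mp (by simpa using this.symm)

noncomputable def symmetricProduct (p : R[X]) (c : R) : R[X] :=
  p.comp (X + C c) * p.comp (C c - X)

theorem symmetricProduct_comp_neg_X (p : R[X]) (c : R) :
    (symmetricProduct p c).comp (-X) = symmetricProduct p c := by
  simp only [symmetricProduct, mul_comp, comp_assoc, add_comp, sub_comp, X_comp, C_comp]
  rw [mul_comm]; congr 2 <;> ring

theorem natDegree_symmetricProduct_le (p : R[X]) (c : R) :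
    (symmetricProduct p c).natDegree ≤ 2 * p.natDegree := by
  have hcomp : ∀ q : R[X], q.natDegree ≤ 1 → (p.comp q).natDegree ≤ p.natDegree := fun q hq =>
    natDegree_comp_le.trans (by simpa using Nat.mul_le_mul_left p.natDegree hq)
  refine natDegree_mul_le.trans ?_
  have h₁ := hcomp (X + C c) (natDegree_add_le_of_degree_le natDegree_X_le (by simp))
  have h₂ := hcomp (C c - X) (natDegree_sub_le_of_le (natDegree_C c).le natDegree_X_le)
  omega

theorem iterate_derivative_symmetricProduct_eval_zero (p : R[X]) (c : R) (n : ℕ) :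
    (derivative^[n] (symmetricProduct p c)).eval 0
      = ∑ j ∈ Finset.range (n + 1), (-1) ^ j * (n.choose j : R)
          * (derivative^[n - j] p).eval c * (derivative^[j] p).eval c := by
  rw [symmetricProduct, iterate_derivative_mul, eval_finsetSum]
  refine Finset.sum_congr rfl fun j _ => ?_
  simp only [iterate_derivative_comp_X_add_C, iterate_derivative_comp_C_sub_X, nsmul_eq_mul,
    eval_mul, eval_comp, eval_pow, eval_neg, eval_one, eval_natCast, eval_add, eval_sub, eval_X,
    eval_C, zero_add, sub_zero]
  ring

end CommRing

theorem norm_aeval_sq_eq_aeval_symmetricProduct (p : ℝ[X]) (x y : ℝ) :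
    ((‖aeval (x + y * I) p‖ ^ 2 : ℝ) : ℂ) = aeval (y * I) (symmetricProduct p x) := by
  push_cast
  rw [← Complex.mul_conj', ← aeval_conj]
  simp only [map_add, map_mul, conj_ofReal, conj_I, symmetricProduct, aeval_comp, aeval_X,
    aeval_C, coe_algebraMap, aeval_sub]
  ring_nf

theorem aeval_ofReal_mul_I_of_comp_neg_X_eq_self {F : ℝ[X]} (hF : F.comp (-X) = F) {k : ℕ}
    (hdeg : F.natDegree ≤ 2 * k) (y : ℝ) :
    aeval (y * I) F
      = ((∑ i ∈ Finset.range (k + 1), (-1) ^ i * F.coeff (2 * i) * y ^ (2 * i) : ℝ) : ℂ) := by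
  have hodd : ∀ n, ¬ 2 ∣ n → F.coeff n = 0 := fun n hn =>
    coeff_eq_zero_of_comp_neg_X_eq_self hF (Nat.odd_iff.mpr (Nat.two_dvd_ne_zero.mp hn))
  have hdeg' : (contract 2 F).natDegree < k + 1 := by
    rw [Nat.lt_succ_iff, natDegree_le_iff_coeff_eq_zero]
    intro i hi
    rw [coeff_contract two_ne_zero]
    exact coeff_eq_zero_of_natDegree_lt (by omega)
  conv_lhs => rw [← expand_contract_of_coeff_eq_zero two_ne_zero hodd]
  rw [expand_aeval, show (y * I) ^ 2 = algebraMap ℝ ℂ (-y ^ 2) by simp [mul_pow],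
    aeval_algebraMap_apply_eq_algebraMap_eval, eval_eq_sum_range' hdeg']
  refine congrArg _ (Finset.sum_congr rfl fun i _ => ?_)
  rw [coeff_contract two_ne_zero, mul_comm i, neg_pow, pow_mul]
  ring

end Polynomial

/-- Jensen's expansion: for a real polynomial `p` of degree `k`,
`|p(x+iy)|² = ∑_{i=0}^{k} Pᵢ(x) y^{2i}/(2i)!` where
`Pᵢ(x) = ∑_{j=0}^{2i} (-1)^{i+j} C(2i,j) p^{(j)}(x) p^{(2i-j)}(x)`. -/
theorem jensen_expansion (p : ℝ[X]) (k : ℕ) (hdeg : p.natDegree = k) :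
    ∀ x y : ℝ,
      (‖Polynomial.aeval (x + y * Complex.I) p‖)^2
        = ∑ i ∈ Finset.range (k + 1),
            (∑ j ∈ Finset.range (2 * i + 1),
              (-1 : ℝ)^(i + j) * (Nat.choose (2 * i) j : ℝ)
                * Polynomial.eval x (derivative^[j] p)
                * Polynomial.eval x (derivative^[2 * i - j] p))
            * y^(2 * i) / (Nat.factorial (2 * i) : ℝ) := by
  intro x y
  set F := symmetricProduct p x
  have hFdeg : F.natDegree ≤ 2 * k := hdeg ▸ natDegree_symmetricProduct_le p x
  apply Complex.ofReal_injective
  rw [norm_aeval_sq_eq_aeval_symmetricProduct,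
    aeval_ofReal_mul_I_of_comp_neg_X_eq_self (symmetricProduct_comp_neg_X p x) hFdeg]
  refine congrArg _ (Finset.sum_congr rfl fun i _ => ?_)
  have hfact : ((2 * i).factorial : ℝ) ≠ 0 := by positivity
  have hcoeff := factorial_mul_coeff_eq_iterate_derivative_eval_zero F (2 * i)
  rw [iterate_derivative_symmetricProduct_eval_zero] at hcoeff
  calc (-1) ^ i * F.coeff (2 * i) * y ^ (2 * i)
      = (-1) ^ i * (((2 * i).factorial : ℝ) * F.coeff (2 * i)) * y ^ (2 * i)
          / ((2 * i).factorial : ℝ) := by field_simp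
    _ = _ := by
      rw [hcoeff, Finset.mul_sum, Finset.sum_mul, Finset.sum_mul]
      refine congrArg (· / _) (Finset.sum_congr rfl fun j _ => ?_)
      ring
end

section
/- A real polynomial p of degree k whose roots are all real and simple satisfies: for each i = 1,…,k−1 the polynomial G_i(x) = (k−i)(p^{(i)}(x))² − (k−i+1)p^{(i−1)}(x)p^{(i+1)}(x) is strictly positive for all real x. -/
/-!
Put `q = p^{(i-1)}` and `n = k - i + 1`, so that the claim reads `(n - 1) q'² - n q q'' > 0`.
By Rolle's theorem every derivative of `p` again has only real simple roots, so
`q = c ∏ (X - r)` over `n` distinct real roots. With `g_r = ∏_{t ≠ r} (X - t)` one has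
`q' = c Σ g_r` and `q q'' = c² ((Σ g_r)² - Σ g_r²)`, whence
`(n - 1) q'² - n q q'' = c² (n Σ g_r² - (Σ g_r)²)`. This is positive by the strict
Cauchy–Schwarz inequality, because at every point `x` the values `g_r(x)` are not all equal.
-/

open Polynomial Finset

theorem Finset.prod_mul_prod_erase_erase {ι M : Type*} [DecidableEq ι] [CommMonoid M]
    (s : Finset ι) (f : ι → M) {a b : ι} (ha : a ∈ s) (hb : b ∈ s.erase a) :
    (∏ i ∈ s, f i) * ∏ i ∈ (s.erase a).erase b, f i
      = (∏ i ∈ s.erase a, f i) * ∏ i ∈ s.erase b, f i := by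
  have hab : a ∈ s.erase b := mem_erase.2 ⟨(ne_of_mem_erase hb).symm, ha⟩
  rw [← mul_prod_erase s f ha, ← mul_prod_erase (s.erase a) f hb,
    ← mul_prod_erase (s.erase b) f hab, erase_right_comm (a := b)]
  ac_rfl

theorem Finset.sum_sum_sub_sq {ι R : Type*} [CommRing R] (s : Finset ι) (a : ι → R) :
    ∑ i ∈ s, ∑ j ∈ s, (a i - a j) ^ 2
      = 2 * (#s * ∑ i ∈ s, a i ^ 2 - (∑ i ∈ s, a i) ^ 2) := by
  simp only [sub_sq, sum_add_distrib, sum_sub_distrib, sum_const, nsmul_eq_mul, mul_assoc,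
    ← mul_sum, ← sum_mul]
  ring

theorem Finset.sq_sum_lt_card_mul_sum_sq {ι K : Type*} [CommRing K] [LinearOrder K]
    [IsStrictOrderedRing K] {s : Finset ι} {a : ι → K} {i j : ι} (hi : i ∈ s) (hj : j ∈ s)
    (hij : a i ≠ a j) : (∑ i ∈ s, a i) ^ 2 < #s * ∑ i ∈ s, a i ^ 2 := by
  have hsub : a i - a j ≠ 0 := sub_ne_zero.2 hij
  have hpos : 0 < ∑ i ∈ s, ∑ j ∈ s, (a i - a j) ^ 2 :=
    sum_pos' (fun _ _ ↦ sum_nonneg fun _ _ ↦ sq_nonneg _) ⟨i, hi,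
      sum_pos' (fun _ _ ↦ sq_nonneg _) ⟨j, hj, by positivity⟩⟩
  rw [sum_sum_sub_sq] at hpos
  linarith

theorem Finset.exists_prod_erase_sub_ne {K : Type*} [CommRing K] [IsDomain K] [DecidableEq K]
    {s : Finset K} (hs : 2 ≤ #s) (x : K) :
    ∃ r ∈ s, ∃ t ∈ s, ∏ u ∈ s.erase r, (x - u) ≠ ∏ u ∈ s.erase t, (x - u) := by
  obtain ⟨r, hr, hxr⟩ : ∃ r ∈ s, x ∈ s → x = r := by
    by_cases hx : x ∈ s
    · exact ⟨x, hx, fun _ ↦ rfl⟩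
    · obtain ⟨r, hr⟩ := card_pos.1 (show 0 < #s by omega)
      exact ⟨r, hr, fun h ↦ absurd h hx⟩
  obtain ⟨t, ht, htr⟩ := exists_mem_ne (show 1 < #s by omega) r
  have htr' : t ∈ s.erase r := mem_erase.2 ⟨htr, ht⟩
  have hrt : r ∈ s.erase t := mem_erase.2 ⟨htr.symm, hr⟩
  -- Both products are multiples of `∏_{u ≠ r, t} (x - u)`, nonzero by the choice of `r`.
  have hx : ∏ u ∈ (s.erase r).erase t, (x - u) ≠ 0 := prod_ne_zero_iff.2 fun u hu hxu ↦ by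
    obtain ⟨-, hur, hus⟩ : u ≠ t ∧ u ≠ r ∧ u ∈ s := by simpa using hu
    obtain rfl := sub_eq_zero.1 hxu
    exact hur (hxr hus)
  refine ⟨r, hr, t, ht, fun h ↦ htr ?_⟩
  rw [← mul_prod_erase _ _ htr', ← mul_prod_erase _ _ hrt,
    erase_right_comm (s := s) (a := t)] at h
  exact sub_right_injective (mul_right_cancel₀ hx h)

namespace Polynomial

section CommRing

variable {R : Type*} [CommRing R] [DecidableEq R]

theorem derivative_prod_X_sub_C (s : Finset R) :
    derivative (∏ r ∈ s, (X - C r)) = ∑ r ∈ s, ∏ t ∈ s.erase r, (X - C t) := by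
  simp [derivative_prod_finset]

theorem prod_X_sub_C_mul_derivative_derivative (s : Finset R) :
    (∏ r ∈ s, (X - C r)) * derivative (derivative (∏ r ∈ s, (X - C r)))
      = (∑ r ∈ s, ∏ t ∈ s.erase r, (X - C t)) ^ 2
        - ∑ r ∈ s, (∏ t ∈ s.erase r, (X - C t)) ^ 2 := by
  have hmul : ∀ r ∈ s, (∏ r ∈ s, (X - C r)) * derivative (∏ t ∈ s.erase r, (X - C t))
      = (∏ t ∈ s.erase r, (X - C t))
        * ((∑ t ∈ s, ∏ u ∈ s.erase t, (X - C u)) - ∏ t ∈ s.erase r, (X - C t)) :=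
    fun r hr ↦ by
      rw [derivative_prod_X_sub_C, mul_sum, ← sum_erase_eq_sub hr, mul_sum]
      exact sum_congr rfl fun t ht ↦ prod_mul_prod_erase_erase s _ hr ht
  rw [derivative_prod_X_sub_C, derivative_sum, mul_sum, sum_congr rfl hmul]
  simp only [mul_sub, sum_sub_distrib, ← sum_mul, sq]

theorem polya_identity_prod_X_sub_C (s : Finset R) :
    ((#s : R[X]) - 1) * derivative (∏ r ∈ s, (X - C r)) ^ 2
      - (#s : R[X]) * ((∏ r ∈ s, (X - C r)) * derivative (derivative (∏ r ∈ s, (X - C r))))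
      = (#s : R[X]) * ∑ r ∈ s, (∏ t ∈ s.erase r, (X - C t)) ^ 2
        - (∑ r ∈ s, ∏ t ∈ s.erase r, (X - C t)) ^ 2 := by
  rw [prod_X_sub_C_mul_derivative_derivative, derivative_prod_X_sub_C]
  ring

end CommRing

section OrderedRing

variable {K : Type*} [CommRing K] [LinearOrder K] [IsStrictOrderedRing K]

theorem polya_pos_prod_X_sub_C {s : Finset K} (hs : 2 ≤ #s) (x : K) :
    0 < ((#s : K) - 1) * eval x (derivative (∏ r ∈ s, (X - C r))) ^ 2
      - #s * (eval x (∏ r ∈ s, (X - C r))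
        * eval x (derivative (derivative (∏ r ∈ s, (X - C r))))) := by
  have h := congrArg (eval x) (polya_identity_prod_X_sub_C s)
  simp only [eval_sub, eval_mul, eval_pow, eval_natCast, eval_one, eval_finsetSum, eval_prod,
    eval_X, eval_C] at h ⊢
  rw [h]
  obtain ⟨r, hr, t, ht, hne⟩ := exists_prod_erase_sub_ne hs x
  exact sub_pos.2 (sq_sum_lt_card_mul_sum_sq hr ht hne)

theorem C_leadingCoeff_mul_prod_roots_toFinset_X_sub_C {q : K[X]}
    (hq : #q.roots.toFinset = q.natDegree) :
    C q.leadingCoeff * ∏ r ∈ q.roots.toFinset, (X - C r) = q := by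
  have h₁ := Multiset.toFinset_card_le q.roots
  have h₂ := card_roots' q
  have hnodup : q.roots.Nodup := Multiset.toFinset_card_eq_card_iff_nodup.1 (by omega)
  rw [prod_eq_multiset_prod, Multiset.toFinset_val, Multiset.dedup_eq_self.2 hnodup]
  exact C_leadingCoeff_mul_prod_multiset_X_sub_C (by omega)

theorem polya_pos_of_card_roots_toFinset {q : K[X]} (hq : #q.roots.toFinset = q.natDegree)
    (h2 : 2 ≤ q.natDegree) (x : K) :
    0 < ((q.natDegree : K) - 1) * eval x (derivative q) ^ 2
      - q.natDegree * (eval x q * eval x (derivative (derivative q))) := by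
  have hc : q.leadingCoeff ≠ 0 := leadingCoeff_ne_zero.2 (by rintro rfl; simp at h2)
  have key := polya_pos_prod_X_sub_C (h2.trans_eq hq.symm) x
  have hfactor := C_leadingCoeff_mul_prod_roots_toFinset_X_sub_C hq
  set s := q.roots.toFinset
  rw [← hq, ← hfactor]
  simp only [derivative_C_mul, eval_mul, eval_C]
  convert mul_pos (sq_pos_of_ne_zero hc) key using 1
  ring

end OrderedRing

theorem card_roots_eq_natDegree_of_complex_roots_real {p : ℝ[X]}
    (hreal : ∀ z : ℂ, aeval z p = 0 → z.im = 0) : Multiset.card p.roots = p.natDegree := by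
  refine splits_iff_card_roots.1 <| Splits.of_splits_map_of_injective
    (algebraMap ℝ ℂ).injective (IsAlgClosed.splits _) fun z hz ↦ ⟨z.re, ?_⟩
  exact Complex.ext rfl (hreal z (mem_aroots'.1 hz).2).symm

theorem nodup_roots_of_not_isRoot_derivative {R : Type*} [CommRing R] [IsDomain R] {p : R[X]}
    (hp : p ≠ 0) (h : ∀ r, p.IsRoot r → ¬(derivative p).IsRoot r) : p.roots.Nodup := by
  classical
  refine Multiset.nodup_iff_count_le_one.2 fun r ↦ ?_
  rw [count_roots]
  by_contra! hr
  obtain ⟨hroot, hroot'⟩ := (one_lt_rootMultiplicity_iff_isRoot hp).1 hr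
  exact h r hroot hroot'

theorem card_roots_toFinset_derivative {q : ℝ[X]} (hq : #q.roots.toFinset = q.natDegree) :
    #(derivative q).roots.toFinset = q.natDegree - 1 ∧
      (derivative q).natDegree = q.natDegree - 1 := by
  have h₁ := card_roots_toFinset_le_derivative q
  have h₂ := (Multiset.toFinset_card_le (derivative q).roots).trans (card_roots' _)
  have h₃ := natDegree_derivative_le q
  omega

theorem card_roots_toFinset_iterate_derivative {q : ℝ[X]}
    (hq : #q.roots.toFinset = q.natDegree) (j : ℕ) :
    #(derivative^[j] q).roots.toFinset = q.natDegree - j ∧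
      (derivative^[j] q).natDegree = q.natDegree - j := by
  induction j with
  | zero => exact ⟨hq, rfl⟩
  | succ j ih =>
    rw [Function.iterate_succ_apply', ← Nat.sub_sub, ← ih.2]
    exact card_roots_toFinset_derivative (ih.1.trans ih.2.symm)

end Polynomial

theorem polya_criterion_forward_general (p : ℝ[X]) (k : ℕ) (hdeg : p.natDegree = k)
    (hreal : ∀ z : ℂ, Polynomial.aeval z p = 0 → z.im = 0)
    (hsimple : ∀ z : ℂ, Polynomial.aeval z p = 0 → Polynomial.aeval z (derivative p) ≠ 0) :
    ∀ i : ℕ, 1 ≤ i → i ≤ k - 1 → ∀ x : ℝ,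
      0 < ((k : ℝ) - i) * (Polynomial.eval x (derivative^[i] p))^2
        - ((k : ℝ) - i + 1) * Polynomial.eval x (derivative^[i-1] p)
            * Polynomial.eval x (derivative^[i+1] p) := by
  intro i hi hik x
  have hp : p ≠ 0 := by rintro rfl; simp at hdeg; omega
  have hcoe (q : ℝ[X]) (r : ℝ) : aeval (r : ℂ) q = eval r q :=
    aeval_algebraMap_apply_eq_algebraMap_eval r q
  have hsimple' : ∀ r : ℝ, p.IsRoot r → ¬(derivative p).IsRoot r := fun r hr hr' ↦
    hsimple r (by simp [hcoe, hr.eq_zero]) (by simp [hcoe, hr'.eq_zero])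
  have hroots : #p.roots.toFinset = p.natDegree := by
    rw [Multiset.toFinset_card_of_nodup (nodup_roots_of_not_isRoot_derivative hp hsimple'),
      card_roots_eq_natDegree_of_complex_roots_real hreal]
  obtain ⟨j, rfl⟩ : ∃ j, i = j + 1 := ⟨i - 1, by omega⟩
  obtain ⟨hq, hqdeg⟩ := card_roots_toFinset_iterate_derivative hroots j
  have key := polya_pos_of_card_roots_toFinset (hq.trans hqdeg.symm) (by omega) x
  rw [hqdeg, hdeg, Nat.cast_sub (by omega)] at key
  simp only [Nat.add_sub_cancel, Function.iterate_succ_apply']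
  push_cast
  linarith

/-- One direction of Polya's (Jensen's second) criterion: if a real polynomial `p` of
degree `k ≥ 2` has all roots real and simple, then for every `i = 1,…,k-1` the
polynomial `Gᵢ(x) = (k-i)(p^{(i)}(x))² - (k-i+1)p^{(i-1)}(x)p^{(i+1)}(x)` is strictly
positive on `ℝ`. -/
theorem polya_criterion_forward (p : ℝ[X]) (k : ℕ) (hk : 2 ≤ k) (hdeg : p.natDegree = k)
    (hreal : ∀ z : ℂ, Polynomial.aeval z p = 0 → z.im = 0)
    (hsimple : ∀ z : ℂ, Polynomial.aeval z p = 0 → Polynomial.aeval z (derivative p) ≠ 0) :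
    ∀ i : ℕ, 1 ≤ i → i ≤ k - 1 → ∀ x : ℝ,
      0 < ((k : ℝ) - i) * (Polynomial.eval x (derivative^[i] p))^2
        - ((k : ℝ) - i + 1) * Polynomial.eval x (derivative^[i-1] p)
            * Polynomial.eval x (derivative^[i+1] p) :=
  polya_criterion_forward_general p k hdeg hreal hsimple
end

section
/- Every nontrivial solution of the ODE y^{(k)} + a₁y^{(k−1)} + ⋯ + a_k y = 0 with complex constant coefficients has only finitely many real zeros, provided that any two distinct roots of the characteristic polynomial λ^k + a₁λ^{k−1} + ⋯ + a_k have distinct real parts. -/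
open Polynomial Filter Topology
open Polynomial Filter Topology

noncomputable section

/-- Antiderivative-with-shift: for any `d` and `p` there is `q` with `q' + d q = p`. -/
lemma exists_poly_resolvent (d : ℂ) (p : ℂ[X]) :
    ∃ q : ℂ[X], derivative q + C d * q = p := by
  rcases eq_or_ne d 0 with rfl | hd
  · -- antiderivative
    refine ⟨p.sum fun n a => C (a / (n + 1)) * X ^ (n + 1), ?_⟩
    simp only [map_zero, zero_mul, add_zero]
    rw [Polynomial.sum, map_sum]
    have : ∀ n ∈ p.support, derivative (C (p.coeff n / (n + 1)) * X ^ (n + 1))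
        = C (p.coeff n) * X ^ n := by
      intro n _
      rw [derivative_C_mul_X_pow]
      congr 1
      push_cast
      rw [div_mul_cancel₀]
      exact Nat.cast_add_one_ne_zero n
    rw [Finset.sum_congr rfl this]
    exact p.sum_C_mul_X_pow_eq
  · set N := p.natDegree with hN
    refine ⟨∑ i ∈ Finset.range (N + 1), ((-1 : ℂ) ^ i * (d⁻¹) ^ (i + 1)) • derivative^[i] p, ?_⟩
    have key : ∀ i, C d * (((-1 : ℂ) ^ i * (d⁻¹) ^ (i + 1)) • derivative^[i] p)
        = ((-1 : ℂ) ^ i * (d⁻¹) ^ i) • derivative^[i] p := by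
      intro i
      rw [← smul_eq_C_mul, smul_smul]
      congr 1
      field_simp
      ring_nf; simp [hd]
    rw [map_sum, Finset.mul_sum]
    have hder : ∀ i, derivative (((-1 : ℂ) ^ i * (d⁻¹) ^ (i + 1)) • derivative^[i] p)
        = -((((-1 : ℂ) ^ (i+1) * (d⁻¹) ^ (i + 1)) • derivative^[i+1] p)) := by
      intro i
      rw [derivative_smul, show derivative ((⇑derivative)^[i] p) = (⇑derivative)^[i+1] p from
        (Function.iterate_succ_apply' _ _ _).symm, ← neg_smul]
      congr 1
      ring
    calc (∑ i ∈ Finset.range (N + 1), derivative ((((-1:ℂ)^i * d⁻¹^(i+1)) • derivative^[i] p)))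
        + ∑ i ∈ Finset.range (N + 1), C d * (((-1:ℂ)^i * d⁻¹^(i+1)) • derivative^[i] p)
        = ∑ i ∈ Finset.range (N + 1),
            ((((-1:ℂ)^i * d⁻¹^i) • derivative^[i] p) - (((-1:ℂ)^(i+1) * d⁻¹^(i+1)) • derivative^[i+1] p)) := by
          rw [← Finset.sum_add_distrib]
          refine Finset.sum_congr rfl fun i _ => ?_
          rw [hder, key]
          ring
      _ = (((-1:ℂ)^0 * d⁻¹^0) • derivative^[0] p)
            - (((-1:ℂ)^(N+1) * d⁻¹^(N+1)) • derivative^[N+1] p) := by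
          exact Finset.sum_range_sub' (fun i => (((-1:ℂ)^i * d⁻¹^i) • derivative^[i] p)) (N+1)
      _ = p := by
          rw [p.iterate_derivative_eq_zero (by omega : p.natDegree < N + 1)]
          simp


lemma hasDerivAt_poly_exp (q : ℂ[X]) (μ : ℂ) (t : ℝ) :
    HasDerivAt (fun s : ℝ => q.eval (s : ℂ) * Complex.exp (μ * s))
      ((derivative q + C μ * q).eval (t : ℂ) * Complex.exp (μ * t)) t := by
  have h1 : HasDerivAt (fun z : ℂ => q.eval z * Complex.exp (μ * z))
      ((derivative q).eval (t : ℂ) * Complex.exp (μ * t)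
        + q.eval (t : ℂ) * (Complex.exp (μ * t) * μ)) (t : ℂ) := by
    have hq : HasDerivAt (fun z : ℂ => q.eval z) ((derivative q).eval (t : ℂ)) (t : ℂ) :=
      q.hasDerivAt _
    have he : HasDerivAt (fun z : ℂ => Complex.exp (μ * z)) (Complex.exp (μ * t) * μ) (t : ℂ) := by
      have := (Complex.hasDerivAt_exp (μ * t)).comp (t : ℂ)
        ((hasDerivAt_id (t : ℂ)).const_mul μ)
      simpa [mul_comm, Function.comp_def] using this
    exact hq.mul he
  have := h1.comp_ofReal
  convert this using 1
  simp [eval_add, eval_mul]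
  ring

lemma iteratedDeriv_shift (y : ℝ → ℂ) (hy : ContDiff ℝ (⊤ : ℕ∞) y) (c : ℂ) (n : ℕ) :
    iteratedDeriv n (fun t => deriv y t - c • y t)
      = fun t => iteratedDeriv (n + 1) y t - c • iteratedDeriv n y t := by
  have hdy : ContDiff ℝ (⊤ : ℕ∞) (deriv y) := by
    exact (contDiff_infty_iff_deriv.mp hy).2
  funext t
  have hf : ContDiffOn ℝ n (deriv y) Set.univ := hdy.contDiffOn.of_le (by exact_mod_cast (le_top : (n : ℕ∞) ≤ ⊤))
  have hyn : ContDiffOn ℝ n y Set.univ := hy.contDiffOn.of_le (by exact_mod_cast (le_top : (n : ℕ∞) ≤ ⊤))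
  have H := iteratedDerivWithin_sub (Set.mem_univ t) uniqueDiffOn_univ (hf t (Set.mem_univ t))
    ((ContDiffOn.const_smul c hyn) t (Set.mem_univ t))
  have H2 := iteratedDerivWithin_const_smul (Set.mem_univ t) uniqueDiffOn_univ c (hyn t (Set.mem_univ t))
  simp only [iteratedDerivWithin_univ] at H H2
  have h1 : iteratedDeriv n (fun t => deriv y t - c • y t) t
      = iteratedDeriv n (deriv y) t - c • iteratedDeriv n y t := by
    refine Eq.trans ?_ (congrArg₂ (· - ·) rfl H2)
    exact H
  rw [h1, iteratedDeriv_succ']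


lemma exp_poly_structure : ∀ (k : ℕ) (P : ℂ[X]), P.Monic → P.natDegree = k →
    ∀ y : ℝ → ℂ, ContDiff ℝ (⊤ : ℕ∞) y →
    (∀ t : ℝ, ∑ j ∈ Finset.range (k + 1), P.coeff j * iteratedDeriv j y t = 0) →
    ∃ (s : Finset ℂ) (p : ℂ → ℂ[X]), (∀ μ ∈ s, P.IsRoot μ) ∧
      ∀ t : ℝ, y t = ∑ μ ∈ s, (p μ).eval (t : ℂ) * Complex.exp (μ * t) := by
  intro k
  induction k with
  | zero =>
    intro P hm hd y hy hode
    refine ⟨∅, fun _ => 0, by simp, fun t => ?_⟩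
    have h0 : P.coeff 0 = 1 := by
      have := hm.leadingCoeff
      rwa [Polynomial.leadingCoeff, hd] at this
    have := hode t
    simpa [h0] using this
  | succ k IH =>
    intro P hm hd y hy hode
    have hdeg : 0 < P.degree := by
      rw [Polynomial.degree_eq_natDegree hm.ne_zero, hd]
      exact_mod_cast Nat.succ_pos k
    obtain ⟨lam, hlam⟩ := Complex.exists_root hdeg
    obtain ⟨Q, hPQ⟩ := Polynomial.dvd_iff_isRoot.mpr hlam
    have hQm : Q.Monic := (monic_X_sub_C lam).of_mul_monic_left (hPQ ▸ hm)
    have hQdeg : Q.natDegree = k := by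
      have h1 : P.natDegree = 1 + Q.natDegree := by
        rw [hPQ, Polynomial.natDegree_mul (Polynomial.X_sub_C_ne_zero lam) hQm.ne_zero,
          Polynomial.natDegree_X_sub_C]
      omega
    set z : ℝ → ℂ := fun t => deriv y t - lam • y t with hzdef
    have hdy : ContDiff ℝ (⊤ : ℕ∞) (deriv y) :=
      (contDiff_infty_iff_deriv.mp hy).2
    have hz : ContDiff ℝ (⊤ : ℕ∞) z := hdy.sub (hy.const_smul lam)
    -- the ODE for z
    have hzode : ∀ t : ℝ, ∑ i ∈ Finset.range (k + 1), Q.coeff i * iteratedDeriv i z t = 0 := by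
      intro t
      have hitz : ∀ i, iteratedDeriv i z t
          = iteratedDeriv (i + 1) y t - lam * iteratedDeriv i y t := by
        intro i
        have := congrFun (iteratedDeriv_shift y hy lam i) t
        simpa [smul_eq_mul, hzdef] using this
      have e1 : ∀ i, P.coeff (i + 1) = Q.coeff i - Q.coeff (i + 1) * lam := by
        intro i
        rw [hPQ, mul_comm, Polynomial.coeff_mul_X_sub_C]
      have e0 : P.coeff 0 = -(Q.coeff 0 * lam) := by
        rw [hPQ, Polynomial.mul_coeff_zero]
        simp
        ring
      have hQtop : Q.coeff (k + 1) = 0 :=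
        Polynomial.coeff_eq_zero_of_natDegree_lt (by omega)
      set u : ℕ → ℂ := fun i => iteratedDeriv i y t with hu
      calc ∑ i ∈ Finset.range (k + 1), Q.coeff i * iteratedDeriv i z t
          = ∑ i ∈ Finset.range (k + 1), (Q.coeff i * u (i + 1) - lam * (Q.coeff i * u i)) := by
            refine Finset.sum_congr rfl fun i _ => ?_
            rw [hitz i]
            ring
        _ = ∑ i ∈ Finset.range (k + 1), Q.coeff i * u (i + 1)
              - lam * ∑ i ∈ Finset.range (k + 1), Q.coeff i * u i := by
            rw [Finset.sum_sub_distrib, Finset.mul_sum]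
        _ = ∑ j ∈ Finset.range (k + 2), P.coeff j * u j := by
            rw [Finset.sum_range_succ' (fun j => P.coeff j * u j) (k + 1)]
            rw [Finset.sum_range_succ' (fun i => Q.coeff i * u i) k]
            simp only [e1, e0, sub_mul]
            rw [Finset.sum_sub_distrib]
            rw [Finset.sum_range_succ (fun i => Q.coeff (i + 1) * lam * u (i + 1)) k]
            rw [hQtop]
            have hcomm : ∀ x : ℕ, lam * (Q.coeff (x + 1) * u (x + 1))
                = Q.coeff (x + 1) * lam * u (x + 1) := fun x => by ring
            simp only [mul_add, Finset.mul_sum, hcomm, zero_mul]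
            ring
        _ = 0 := hode t
    obtain ⟨s, p, hproots, hrep⟩ := IH Q hQm hQdeg z hz hzode
    -- solve w' - lam w = z within the class
    set q : ℂ → ℂ[X] := fun μ => Classical.choose (exists_poly_resolvent (μ - lam) (p μ)) with hqdef
    have hq : ∀ μ, derivative (q μ) + C (μ - lam) * q μ = p μ :=
      fun μ => Classical.choose_spec (exists_poly_resolvent (μ - lam) (p μ))
    set w : ℝ → ℂ := fun t => ∑ μ ∈ s, (q μ).eval (t : ℂ) * Complex.exp (μ * t) with hwdef
    have hw : ∀ t : ℝ, HasDerivAt w (lam * w t + z t) t := by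
      intro t
      have hsum := HasDerivAt.fun_sum (fun μ (_ : μ ∈ s) => hasDerivAt_poly_exp (q μ) μ t)
      refine hsum.congr_deriv (Eq.symm ?_)
      rw [hrep t, Finset.mul_sum, ← Finset.sum_add_distrib]
      refine Finset.sum_congr rfl fun μ _ => ?_
      have hqμ : derivative (q μ) = p μ - C (μ - lam) * q μ := by
        have := hq μ
        linear_combination this
      rw [hqμ]
      simp only [eval_add, eval_sub, eval_mul, eval_C]
      ring
    have hyd : ∀ t : ℝ, HasDerivAt y (deriv y t) t := fun t =>
      ((hy.differentiable (by simp)) t).hasDerivAt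
    set g : ℝ → ℂ := fun t => (y t - w t) * Complex.exp (-(lam * t)) with hgdef
    have hg : ∀ t : ℝ, HasDerivAt g 0 t := by
      intro t
      have h2 : HasDerivAt (fun t : ℝ => Complex.exp (-(lam * t)))
          (Complex.exp (-(lam * t)) * (-lam)) t := by
        have hc : HasDerivAt (fun z : ℂ => Complex.exp (-(lam * z)))
            (Complex.exp (-(lam * t)) * (-lam)) (t : ℂ) := by
          have h3 := (Complex.hasDerivAt_exp (-(lam * t))).comp (t : ℂ)
            (((hasDerivAt_id (t : ℂ)).const_mul lam).neg)
          simpa [Function.comp_def] using h3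
        exact hc.comp_ofReal
      have h1 := ((hyd t).sub (hw t)).mul h2
      refine h1.congr_deriv (Eq.symm ?_)
      simp only [hzdef, smul_eq_mul, Pi.sub_apply]
      ring
    have hconst : ∀ t : ℝ, g t = g 0 := fun t =>
      is_const_of_deriv_eq_zero (fun x => (hg x).differentiableAt)
        (fun x => (hg x).deriv) t 0
    have hyw : ∀ t : ℝ, y t = w t + g 0 * Complex.exp (lam * t) := by
      intro t
      have h := hconst t
      have : y t - w t = g 0 * Complex.exp (lam * t) := by
        rw [← h]
        simp only [hgdef]
        rw [mul_assoc, ← Complex.exp_add]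
        simp
      linear_combination this
    classical
    refine ⟨insert lam s,
      fun μ => (if μ ∈ s then q μ else 0) + (if μ = lam then C (g 0) else 0), ?_, ?_⟩
    · intro μ hμ
      rcases Finset.mem_insert.mp hμ with rfl | hμs
      · exact hlam
      · have := hproots μ hμs
        simp only [Polynomial.IsRoot.def] at this ⊢
        rw [hPQ, eval_mul, this, mul_zero]
    · intro t
      rw [hyw t, hwdef]
      have hsplit : ∀ μ ∈ insert lam s,
          ((if μ ∈ s then q μ else 0) + (if μ = lam then C (g 0) else 0)).eval (t : ℂ)
            * Complex.exp (μ * t)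
          = (if μ ∈ s then (q μ).eval (t : ℂ) * Complex.exp (μ * t) else 0)
            + (if μ = lam then g 0 * Complex.exp (μ * t) else 0) := by
        intro μ _
        split_ifs <;> simp [add_mul]
      rw [Finset.sum_congr rfl hsplit, Finset.sum_add_distrib]
      congr 1
      · rw [Finset.sum_ite_mem, Finset.inter_eq_right.mpr (Finset.subset_insert lam s)]
      · rw [Finset.sum_ite_eq' (insert lam s) lam (fun μ => g 0 * Complex.exp (μ * t))]
        simp


lemma aux1 (R : ℝ[X]) (u : ℝ) (hu : 0 < u) :
    Tendsto (fun t : ℝ => R.eval t * Real.exp (-(u * t))) atTop (𝓝 0) := by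
  have h := (R.comp (C u⁻¹ * X)).tendsto_div_exp_atTop.comp
    (tendsto_id.const_mul_atTop hu)
  convert h using 2 with t
  simp only [Function.comp_apply, eval_comp, eval_mul, eval_C, eval_X, id_eq]
  rw [inv_mul_cancel_left₀ hu.ne']
  rw [Real.exp_neg, div_eq_mul_inv]

lemma aux2 (p : ℂ[X]) (ν : ℂ) (hν : ν.re < 0) :
    Tendsto (fun t : ℝ => p.eval (t : ℂ) * Complex.exp (ν * t)) atTop (𝓝 0) := by
  rw [tendsto_zero_iff_norm_tendsto_zero]
  set R : ℝ[X] := ∑ i ∈ Finset.range (p.natDegree + 1), C ‖p.coeff i‖ * X ^ i with hR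
  have hRe : ∀ t : ℝ, R.eval t = ∑ i ∈ Finset.range (p.natDegree + 1), ‖p.coeff i‖ * t ^ i := by
    intro t
    rw [hR, eval_finset_sum]
    simp [eval_mul, eval_pow]
  refine squeeze_zero' (g := fun t : ℝ => R.eval t * Real.exp (ν.re * t))
    (Eventually.of_forall fun t => norm_nonneg _) ?_ ?_
  · filter_upwards [eventually_ge_atTop (0 : ℝ)] with t ht
    rw [norm_mul, show ‖Complex.exp (ν * (t : ℂ))‖ = Real.exp ((ν * (t : ℂ)).re) from
      Complex.norm_exp _]
    have hre : (ν * (t : ℂ)).re = ν.re * t := by simp [Complex.mul_re]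
    rw [hre]
    have hb : ‖p.eval (t : ℂ)‖ ≤ R.eval t := by
      rw [p.eval_eq_sum_range, hRe]
      refine (norm_sum_le _ _).trans ?_
      refine Finset.sum_le_sum fun i _ => ?_
      rw [norm_mul, norm_pow, Complex.norm_real, Real.norm_eq_abs, abs_of_nonneg ht]
    exact mul_le_mul_of_nonneg_right hb (Real.exp_nonneg _)
  · have := aux1 R (-ν.re) (by linarith)
    convert this using 3 with t
    ring_nf

lemma aux3 (p : ℂ[X]) (hp : p ≠ 0) :
    ∃ δ > 0, ∀ᶠ t : ℝ in atTop, δ ≤ ‖p.eval (t : ℂ)‖ := by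
  rcases Nat.eq_zero_or_pos p.natDegree with h0 | hpos
  · obtain ⟨c, rfl⟩ := Polynomial.natDegree_eq_zero.mp h0
    have hc : c ≠ 0 := fun h => hp (by rw [h, map_zero])
    exact ⟨‖c‖, norm_pos_iff.mpr hc, Eventually.of_forall fun t => by simp⟩
  · have hdeg : 0 < p.degree := natDegree_pos_iff_degree_pos.mp hpos
    have hz : Tendsto (fun t : ℝ => ‖((t : ℂ))‖) atTop atTop := by
      have : ∀ t : ℝ, ‖((t : ℂ))‖ = |t| := fun t => RCLike.norm_ofReal (K := ℂ) t
      simp only [this]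
      exact tendsto_abs_atTop_atTop
    have := p.tendsto_norm_atTop hdeg hz
    exact ⟨1, one_pos, this.eventually_ge_atTop 1⟩

lemma eventually_ne_zero_atTop (s : Finset ℂ) (p : ℂ → ℂ[X])
    (hne : s.Nonempty) (hp : ∀ μ ∈ s, p μ ≠ 0)
    (hre : ∀ μ ∈ s, ∀ ν ∈ s, μ ≠ ν → μ.re ≠ ν.re) :
    ∀ᶠ t : ℝ in atTop, ∑ μ ∈ s, (p μ).eval (t : ℂ) * Complex.exp (μ * t) ≠ 0 := by
  obtain ⟨μ₀, hμ₀s, hmax⟩ := s.exists_max_image Complex.re hne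
  set r : ℝ → ℂ := fun t => ∑ μ ∈ s.erase μ₀, (p μ).eval (t : ℂ) * Complex.exp ((μ - μ₀) * t)
    with hrdef
  have hr : Tendsto r atTop (𝓝 0) := by
    rw [hrdef]
    have : (0 : ℂ) = ∑ μ ∈ s.erase μ₀, (0 : ℂ) := by simp
    rw [this]
    refine tendsto_finset_sum _ fun μ hμ => aux2 _ _ ?_
    have hμs := Finset.mem_of_mem_erase hμ
    have hμne := Finset.ne_of_mem_erase hμ
    have h1 : μ.re ≤ μ₀.re := hmax μ hμs
    have h2 : μ.re ≠ μ₀.re := hre μ hμs μ₀ hμ₀s hμne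
    simp only [Complex.sub_re]
    cases lt_or_eq_of_le h1 with
    | inl h => linarith
    | inr h => exact absurd h h2
  obtain ⟨δ, hδ, hev⟩ := aux3 (p μ₀) (hp μ₀ hμ₀s)
  have hrs : ∀ᶠ t in atTop, ‖r t‖ < δ :=
    (NormedAddCommGroup.tendsto_nhds_zero.mp hr) δ hδ
  filter_upwards [hev, hrs] with t h1 h2
  intro hzero
  have hdecomp : ∑ μ ∈ s, (p μ).eval (t : ℂ) * Complex.exp (μ * t)
      = ((p μ₀).eval (t : ℂ) + r t) * Complex.exp (μ₀ * t) := by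
    rw [← Finset.add_sum_erase _ _ hμ₀s, add_mul, Finset.sum_mul]
    congr 1
    refine Finset.sum_congr rfl fun μ hμ => ?_
    rw [mul_assoc, ← Complex.exp_add]
    congr 2
    ring_nf
  rw [hdecomp, mul_eq_zero] at hzero
  rcases hzero with hzero | hzero
  · have : (p μ₀).eval (t : ℂ) = -r t := by linear_combination hzero
    rw [this, norm_neg] at h1
    linarith
  · exact Complex.exp_ne_zero _ hzero

lemma eventually_ne_zero_atBot (s : Finset ℂ) (p : ℂ → ℂ[X])
    (hne : s.Nonempty) (hp : ∀ μ ∈ s, p μ ≠ 0)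
    (hre : ∀ μ ∈ s, ∀ ν ∈ s, μ ≠ ν → μ.re ≠ ν.re) :
    ∀ᶠ t : ℝ in atBot, ∑ μ ∈ s, (p μ).eval (t : ℂ) * Complex.exp (μ * t) ≠ 0 := by
  classical
  set s' : Finset ℂ := s.image (fun μ => -μ) with hs'
  set p' : ℂ → ℂ[X] := fun ν => (p (-ν)).comp (-X) with hp'def
  have hinj : ∀ a ∈ s, ∀ b ∈ s, -a = -b → a = b := fun a _ b _ h => neg_injective h
  have hkey : ∀ t : ℝ, ∑ ν ∈ s', (p' ν).eval (t : ℂ) * Complex.exp (ν * t)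
      = ∑ μ ∈ s, (p μ).eval ((-t : ℝ) : ℂ) * Complex.exp (μ * ((-t : ℝ) : ℂ)) := by
    intro t
    rw [hs', Finset.sum_image hinj]
    refine Finset.sum_congr rfl fun μ hμ => ?_
    rw [hp'def]
    simp only [neg_neg, eval_comp, eval_neg, eval_X]
    push_cast
    ring_nf
  have h := eventually_ne_zero_atTop s' p' (hne.image _) ?_ ?_
  · rw [eventually_atTop] at h
    obtain ⟨T, hT⟩ := h
    rw [eventually_atBot]
    refine ⟨-T, fun b hb => ?_⟩
    have := hT (-b) (by linarith)
    rw [hkey (-b)] at this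
    simpa using this
  · intro ν hν
    obtain ⟨μ, hμs, rfl⟩ := Finset.mem_image.mp hν
    rw [hp'def]
    simp only [neg_neg]
    intro hcomp
    refine hp μ hμs (Polynomial.funext fun z => ?_)
    have := congrArg (eval (-z)) hcomp
    simpa [eval_comp] using this
  · intro ν₁ hν₁ ν₂ hν₂ hne12
    obtain ⟨μ₁, hμ₁, rfl⟩ := Finset.mem_image.mp hν₁
    obtain ⟨μ₂, hμ₂, rfl⟩ := Finset.mem_image.mp hν₂
    have : μ₁ ≠ μ₂ := fun h => hne12 (by rw [h])
    have := hre μ₁ hμ₁ μ₂ hμ₂ this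
    simp only [Complex.neg_re]
    exact fun h => this (by linarith [neg_injective h])

/-- If any two distinct roots of the (monic, degree `k`) characteristic polynomial of a
linear ODE with constant complex coefficients have distinct real parts, then every
nontrivial solution `y : ℝ → ℂ` has finitely many real zeros. -/
theorem finitely_many_real_zeros_of_exponential_sum
    (k : ℕ) (hk : 1 ≤ k) (P : ℂ[X]) (hmonic : P.Monic) (hdeg : P.natDegree = k)
    (hroots : ∀ lam mu : ℂ, P.IsRoot lam → P.IsRoot mu → lam ≠ mu → lam.re ≠ mu.re)
    (y : ℝ → ℂ) (hy : ContDiff ℝ (⊤ : ℕ∞) y)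
    (hode : ∀ t : ℝ, ∑ j ∈ Finset.range (k + 1), P.coeff j * iteratedDeriv j y t = 0)
    (hnontriv : y ≠ 0) :
    {t : ℝ | y t = 0}.Finite := by
  classical
  obtain ⟨s, p, hroots_s, hrep⟩ := exp_poly_structure k P hmonic hdeg y hy hode
  set s' : Finset ℂ := s.filter (fun μ => p μ ≠ 0) with hs'
  have hrep' : ∀ t : ℝ, y t = ∑ μ ∈ s', (p μ).eval (t : ℂ) * Complex.exp (μ * t) := by
    intro t
    rw [hrep t, hs']
    exact (Finset.sum_filter_of_ne fun μ hμ h => by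
      intro hp0
      exact h (by rw [hp0]; simp)).symm
  have hs'ne : s'.Nonempty := by
    by_contra hemp
    rw [Finset.not_nonempty_iff_eq_empty] at hemp
    refine hnontriv (funext fun t => ?_)
    rw [hrep' t, hemp]
    simp
  have hp' : ∀ μ ∈ s', p μ ≠ 0 := fun μ hμ => (Finset.mem_filter.mp hμ).2
  have hre' : ∀ μ ∈ s', ∀ ν ∈ s', μ ≠ ν → μ.re ≠ ν.re := by
    intro μ hμ ν hν hne
    exact hroots μ ν (hroots_s μ (Finset.mem_filter.mp hμ).1)
      (hroots_s ν (Finset.mem_filter.mp hν).1) hne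
  obtain ⟨T, hT⟩ := eventually_atTop.mp (eventually_ne_zero_atTop s' p hs'ne hp' hre')
  obtain ⟨B, hB⟩ := eventually_atBot.mp (eventually_ne_zero_atBot s' p hs'ne hp' hre')
  have hsub : {t : ℝ | y t = 0} ⊆ Set.Icc B T := by
    intro t ht
    simp only [Set.mem_setOf_eq] at ht
    constructor
    · by_contra h
      exact hB t (by linarith) (by rw [← hrep' t]; exact ht)
    · by_contra h
      exact hT t (by linarith) (by rw [← hrep' t]; exact ht)
  rw [← Set.not_infinite]
  intro hinf
  obtain ⟨x, _, hacc⟩ := hinf.exists_accPt_of_subset_isCompact isCompact_Icc hsub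
  have hfreq : ∃ᶠ z in 𝓝[≠] x, y z = 0 := by
    rw [accPt_iff_frequently] at hacc
    rw [frequently_nhdsWithin_iff]
    exact hacc.mono fun z hz => ⟨hz.2, hz.1⟩
  have han : AnalyticOnNhd ℝ y Set.univ := by
    have hF : Differentiable ℂ (fun z : ℂ => ∑ μ ∈ s, (p μ).eval z * Complex.exp (μ * z)) := by
      intro z
      refine DifferentiableAt.fun_sum fun μ _ => ?_
      exact ((p μ).differentiableAt).mul ((differentiableAt_id.const_mul μ).cexp)
    have hyF : y = (fun z : ℂ => ∑ μ ∈ s, (p μ).eval z * Complex.exp (μ * z)) ∘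
        (fun t : ℝ => (t : ℂ)) := funext fun t => hrep t
    intro x _
    rw [hyF]
    exact ((hF.analyticAt (x : ℂ)).restrictScalars).comp (Complex.ofRealCLM.analyticAt x)
  have heq := han.eqOn_zero_of_preconnected_of_frequently_eq_zero isPreconnected_univ
    (Set.mem_univ x) hfreq
  exact hnontriv (funext fun t => heq (Set.mem_univ t))
end
end

section
/- If q is a real polynomial of degree d with all coefficients nonzero, then the number of positive real roots of q (counted with multiplicity) does not exceed the number of sign changes in its coefficient sequence, and has the same parity as that number of sign changes. -/
/-!
The bound is Mathlib's `Polynomial.roots_countP_pos_le_signVariations`, once the sign variations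
of a polynomial without vanishing coefficients are identified with the number of adjacent sign
changes. For the parity, both counts are compared with the sign of `q(0) · lc(q)`: along the
coefficients, each sign change flips the sign of `c₀ cᵢ`; along the roots, splitting off a root
`a` multiplies `q(0)` by `-a` and keeps `lc(q)`, and a polynomial without real roots has `q(0)` of
the same sign as its leading coefficient by the intermediate value theorem.
-/

open Polynomial Finset Filter

section OrderedRing

variable {R : Type*} [Ring R] [LinearOrder R] [IsStrictOrderedRing R]

theorem sign_eq_neg_sign_iff_mul_neg {a b : R} (ha : a ≠ 0) (hb : b ≠ 0) :
    SignType.sign b = -SignType.sign a ↔ a * b < 0 := by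
  rcases ha.lt_or_gt with ha | ha <;> rcases hb.lt_or_gt with hb | hb <;>
    simp [mul_neg_iff, ha, hb, ha.not_gt, hb.not_gt]

theorem mul_pos_iff_mul_pos_iff_mul_pos {a b c : R} (ha : a ≠ 0) (hb : b ≠ 0) (hc : c ≠ 0) :
    0 < a * c ↔ (0 < a * b ↔ 0 < b * c) := by
  rcases ha.lt_or_gt with ha | ha <;> rcases hb.lt_or_gt with hb | hb <;>
    rcases hc.lt_or_gt with hc | hc <;>
    simp [mul_pos_iff, ha, hb, hc, ha.not_gt, hb.not_gt, hc.not_gt]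

theorem mul_pos_iff_even_card_filter_mul_neg (c : ℕ → R) {d : ℕ} (hc : ∀ i ≤ d, c i ≠ 0) :
    0 < c 0 * c d ↔ Even #{i ∈ range d | c i * c (i + 1) < 0} := by
  induction d with
  | zero => simpa using mul_self_pos.2 (hc 0 le_rfl)
  | succ d ih =>
    have hd := hc d (by omega)
    have hd' := hc (d + 1) le_rfl
    rw [mul_pos_iff_mul_pos_iff_mul_pos (hc 0 (by omega)) hd hd',
      ih fun i hi => hc i (by omega), range_add_one, filter_insert]
    split_ifs with hneg
    · simp [hneg.not_gt, card_insert_of_notMem, Nat.even_add_one]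
    · simp [(mul_ne_zero hd hd').lt_of_le' (not_lt.1 hneg)]

theorem Polynomial.signVariations_eq_card_filter_mul_neg {P : R[X]} {d : ℕ}
    (hdeg : P.natDegree = d) (hcoeff : ∀ i ≤ d, P.coeff i ≠ 0) :
    P.signVariations = #{i ∈ range d | P.coeff i * P.coeff (i + 1) < 0} := by
  induction d generalizing P with
  | zero => rw [eq_C_of_natDegree_eq_zero hdeg, ← monomial_zero_left, signVariations_monomial]; rfl
  | succ d ih =>
    have hP : P ≠ 0 := fun h => hcoeff 0 d.succ.zero_le (by simp [h])
    have hnext : P.nextCoeff = P.coeff d := by simp [nextCoeff_of_natDegree_pos, hdeg]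
    have hnext0 : P.nextCoeff ≠ 0 := hnext ▸ hcoeff d d.le_succ
    have herase : ∀ i ≤ d, P.eraseLead.coeff i = P.coeff i := fun i hi =>
      eraseLead_coeff_of_ne i (by omega)
    have ih' := ih (by rw [natDegree_eraseLead hnext0, hdeg]; rfl)
      (fun i hi => herase i hi ▸ hcoeff i (by omega))
    have hfilter : {i ∈ range d | P.eraseLead.coeff i * P.eraseLead.coeff (i + 1) < 0} =
        {i ∈ range d | P.coeff i * P.coeff (i + 1) < 0} :=
      filter_congr fun i hi => by
        rw [mem_range] at hi; rw [herase i hi.le, herase (i + 1) hi]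
    rw [signVariations_eq_eraseLead_add_ite hP, ih', hfilter,
      leadingCoeff_eraseLead_eq_nextCoeff hnext0, hnext, leadingCoeff, hdeg]
    simp only [sign_eq_neg_sign_iff_mul_neg (hcoeff d d.le_succ) (hcoeff _ le_rfl),
      range_add_one, filter_insert]
    split_ifs <;> simp [card_insert_of_notMem]

end OrderedRing

namespace Polynomial

theorem eval_zero_mul_leadingCoeff_pos {p : ℝ[X]} (hp : ∀ x, ¬p.IsRoot x) :
    0 < p.eval 0 * p.leadingCoeff := by
  wlog hlc : 0 < p.leadingCoeff generalizing p
  · have hp0 : p ≠ 0 := fun h => hp 0 (by simp [h])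
    have hlc' : p.leadingCoeff < 0 := (leadingCoeff_ne_zero.2 hp0).lt_of_le (not_lt.1 hlc)
    simpa using this (p := -p) (by simpa using hp) (by simpa using hlc')
  rcases Nat.eq_zero_or_pos p.natDegree with hdeg | hdeg
  · rw [leadingCoeff, hdeg, coeff_zero_eq_eval_zero] at hlc ⊢
    positivity
  have hev : ∀ᶠ x in atTop, 0 ≤ p.eval x :=
    (p.tendsto_atTop_of_leadingCoeff_nonneg (natDegree_pos_iff_degree_pos.1 hdeg)
      hlc.le).eventually_ge_atTop 0
  by_contra! h
  obtain ⟨x, hx⟩ := intermediate_value_univ₂_eventually₁ p.continuous continuous_const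
    (nonpos_of_mul_nonpos_left h hlc) hev
  exact hp x hx

theorem eval_zero_mul_leadingCoeff_pos_iff_even_countP_roots {p : ℝ[X]} (h0 : p.eval 0 ≠ 0) :
    0 < p.eval 0 * p.leadingCoeff ↔ Even (p.roots.countP (0 < ·)) := by
  induction hn : Multiset.card p.roots generalizing p with
  | zero =>
    have hp : p ≠ 0 := fun h => h0 (by simp [h])
    have hroots : p.roots = 0 := Multiset.card_eq_zero.1 hn
    have hnoroot : ∀ x, ¬p.IsRoot x := fun x hx => by simpa [hroots] using (mem_roots hp).2 hx
    simp [hroots, eval_zero_mul_leadingCoeff_pos hnoroot]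
  | succ n ih =>
    obtain ⟨a, ha⟩ := Multiset.card_pos_iff_exists_mem.1 (by omega : 0 < Multiset.card p.roots)
    obtain ⟨r, rfl⟩ := dvd_iff_isRoot.2 (isRoot_of_mem_roots ha)
    have hr : r ≠ 0 := by rintro rfl; simp at h0
    have ha0 : a ≠ 0 := by rintro rfl; simp at h0
    have hr0 : r.eval 0 ≠ 0 := by simpa [ha0] using h0
    rw [roots_mul (mul_ne_zero (X_sub_C_ne_zero a) hr), roots_X_sub_C,
      Multiset.singleton_add] at hn ⊢
    rw [Multiset.card_cons, add_left_inj] at hn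
    have hx : r.eval 0 * r.leadingCoeff ≠ 0 := mul_ne_zero hr0 (leadingCoeff_ne_zero.2 hr)
    rw [eval_mul, leadingCoeff_mul, leadingCoeff_X_sub_C, one_mul, Multiset.countP_cons,
      Nat.even_add, ← ih hr0 hn, mul_assoc]
    generalize r.eval 0 * r.leadingCoeff = x at hx ⊢
    rcases ha0.lt_or_gt with ha | ha <;> rcases hx.lt_or_gt with hx | hx <;>
      simp [mul_neg_iff, ha, hx, ha.not_gt, hx.not_gt]

end Polynomial

/-- Descartes' rule of signs with parity, for a real polynomial of degree `d` with all
coefficients nonzero: the number of positive roots (with multiplicity) is at most the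
number of sign changes, and has the same parity. -/
theorem descartes_rule_of_signs (q : ℝ[X]) (d : ℕ) (hdeg : q.natDegree = d)
    (hcoeff : ∀ i ≤ d, q.coeff i ≠ 0) :
    (q.roots.filter (fun x => 0 < x)).card
        ≤ ((Finset.range d).filter (fun i => q.coeff i * q.coeff (i + 1) < 0)).card ∧
      (q.roots.filter (fun x => 0 < x)).card
        ≡ ((Finset.range d).filter (fun i => q.coeff i * q.coeff (i + 1) < 0)).card [MOD 2] := by
  have hV := signVariations_eq_card_filter_mul_neg hdeg hcoeff
  have hlc : q.leadingCoeff = q.coeff d := by rw [leadingCoeff, hdeg]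
  have h0 : q.eval 0 ≠ 0 := coeff_zero_eq_eval_zero q ▸ hcoeff 0 d.zero_le
  have hparity := eval_zero_mul_leadingCoeff_pos_iff_even_countP_roots h0
  rw [← coeff_zero_eq_eval_zero, hlc, mul_pos_iff_even_card_filter_mul_neg q.coeff hcoeff, ← hV,
    Nat.even_iff, Nat.even_iff] at hparity
  rw [← Multiset.countP_eq_card_filter, ← hV]
  exact ⟨roots_countP_pos_le_signVariations q, by unfold Nat.ModEq; omega⟩
end

section
/- The maximal number of isolated real zeros of a nonnegative real polynomial of degree 2k in l variables which is a sum of squares of real polynomials of degree at most k is at least k^l: explicitly, the polynomial Σ_{j=1}^{l} (∏_{m=1}^{k} (x_j − m))² is a sum of squares of polynomials of degree k, is nonnegative, and has exactly k^l real zeros, all isolated. -/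
open MvPolynomial

/-! Each summand `q_j(x_j)²` is a square of a polynomial of total degree `k`, since over a domain
total degrees add under products. A sum of real squares vanishes exactly where every summand does,
so the zero set is the grid `{1,…,k}^l`; being finite, it consists of isolated points. -/

namespace MvPolynomial

variable {R σ : Type*} [CommRing R]

theorem totalDegree_X_sub_C [Nontrivial R] (j : σ) (a : R) :
    (X j - C a : MvPolynomial σ R).totalDegree = 1 := by
  rw [sub_eq_add_neg, ← C_neg, totalDegree_add_eq_left_of_totalDegree_lt] <;>
    simp [totalDegree_C, totalDegree_X]

theorem totalDegree_prod_of_isDomain [IsDomain R] {ι : Type*} (s : Finset ι)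
    (f : ι → MvPolynomial σ R) (hf : ∀ i ∈ s, f i ≠ 0) :
    (∏ i ∈ s, f i).totalDegree = ∑ i ∈ s, (f i).totalDegree := by
  induction s using Finset.cons_induction with
  | empty => simp
  | cons a s ha ih =>
    rw [Finset.forall_mem_cons] at hf
    rw [Finset.prod_cons, Finset.sum_cons,
      totalDegree_mul_of_isDomain hf.1 (Finset.prod_ne_zero_iff.mpr hf.2), ih hf.2]

theorem totalDegree_prod_X_sub_C [IsDomain R] {ι : Type*} (j : σ) (s : Finset ι) (a : ι → R) :
    (∏ i ∈ s, (X j - C (a i))).totalDegree = s.card := by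
  rw [totalDegree_prod_of_isDomain s _ fun i _ h => by
      simpa [h] using totalDegree_X_sub_C (σ := σ) j (a i)]
  simp [totalDegree_X_sub_C]

theorem eval_sum_sq_eq_zero_iff [LinearOrder R] [IsStrictOrderedRing R] {ι : Type*}
    (s : Finset ι) (g : ι → MvPolynomial σ R) (x : σ → R) :
    eval x (∑ i ∈ s, g i ^ 2) = 0 ↔ ∀ i ∈ s, eval x (g i) = 0 := by
  simp only [map_sum, map_pow]
  rw [Finset.sum_eq_zero_iff_of_nonneg fun i _ => sq_nonneg _]
  simp only [sq_eq_zero_iff]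

end MvPolynomial

theorem Set.ncard_setOf_forall_mem {ι α : Type*} [Fintype ι] [DecidableEq ι] (T : Finset α) :
    {x : ι → α | ∀ i, x i ∈ T}.ncard = T.card ^ Fintype.card ι := by
  have : {x : ι → α | ∀ i, x i ∈ T} = ↑(Fintype.piFinset fun _ : ι => T) := by
    ext x; simp
  rw [this, Set.ncard_coe_finset, Fintype.card_piFinset, Finset.prod_const, Finset.card_univ]

theorem Set.Finite.nhdsWithin_diff_singleton_eq_bot {X : Type*} [TopologicalSpace X] [T1Space X]
    {s : Set X} (hs : s.Finite) (x : X) : nhdsWithin x (s \ {x}) = ⊥ := by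
  rw [← notMem_closure_iff_nhdsWithin_eq_bot, hs.sdiff.isClosed.closure_eq]
  simp

theorem sos_with_kl_isolated_zeros_general (l k : ℕ)
    (F : MvPolynomial (Fin l) ℝ)
    (hF : F = ∑ j : Fin l, (∏ m ∈ Finset.Icc 1 k, (X j - C (m : ℝ)))^2) :
    (∃ g : Fin l → MvPolynomial (Fin l) ℝ,
        (∀ j, (g j).totalDegree = k) ∧ F = ∑ j : Fin l, (g j)^2) ∧
    (∀ x : Fin l → ℝ, 0 ≤ MvPolynomial.eval x F) ∧
    {x : Fin l → ℝ | MvPolynomial.eval x F = 0}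
      = {x : Fin l → ℝ | ∀ j, ∃ m : ℕ, 1 ≤ m ∧ m ≤ k ∧ x j = (m : ℝ)} ∧
    {x : Fin l → ℝ | MvPolynomial.eval x F = 0}.Finite ∧
    {x : Fin l → ℝ | MvPolynomial.eval x F = 0}.ncard = k ^ l ∧
    (∀ x₀ : Fin l → ℝ, MvPolynomial.eval x₀ F = 0 →
      nhdsWithin x₀ ({x : Fin l → ℝ | MvPolynomial.eval x F = 0} \ {x₀}) = ⊥) := by
  set T : Finset ℝ := (Finset.Icc 1 k).image (Nat.cast : ℕ → ℝ)
  have hzero : {x : Fin l → ℝ | eval x F = 0}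
      = {x : Fin l → ℝ | ∀ j, ∃ m : ℕ, 1 ≤ m ∧ m ≤ k ∧ x j = (m : ℝ)} := by
    ext x
    rw [Set.mem_ofPred_eq, hF, eval_sum_sq_eq_zero_iff]
    simp [Finset.prod_eq_zero_iff, sub_eq_zero, and_assoc]
  have hgrid : {x : Fin l → ℝ | eval x F = 0} = {x : Fin l → ℝ | ∀ j, x j ∈ T} := by
    rw [hzero]
    ext x
    simp [T, eq_comm, and_assoc]
  have hfinite : {x : Fin l → ℝ | eval x F = 0}.Finite := by
    rw [hgrid]
    exact Set.Finite.pi' fun _ => T.finite_toSet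
  refine ⟨⟨fun j => ∏ m ∈ Finset.Icc 1 k, (X j - C (m : ℝ)), fun j => ?_, hF⟩, fun x => ?_, hzero, hfinite, ?_,
    fun x₀ _ => hfinite.nhdsWithin_diff_singleton_eq_bot x₀⟩
  · rw [totalDegree_prod_X_sub_C, Nat.card_Icc, Nat.add_sub_cancel]
  · rw [hF, map_sum]
    exact Finset.sum_nonneg fun j _ => by rw [map_pow]; exact sq_nonneg _
  · rw [hgrid, Set.ncard_setOf_forall_mem, Finset.card_image_of_injective _ Nat.cast_injective]
    simp

/-- The polynomial `F = ∑_j (∏_{m=1}^k (x_j - m))²` in `l` variables is a sum of squares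
of polynomials of degree `k`, is nonnegative, and its real zero set is the grid
`{1,…,k}^l`, consisting of exactly `k^l` isolated points. Hence `♯̃(2k,l) ≥ k^l`. -/
theorem sos_with_kl_isolated_zeros (l k : ℕ) (hl : 1 ≤ l) (hk : 1 ≤ k)
    (F : MvPolynomial (Fin l) ℝ)
    (hF : F = ∑ j : Fin l, (∏ m ∈ Finset.Icc 1 k, (X j - C (m : ℝ)))^2) :
    (∃ g : Fin l → MvPolynomial (Fin l) ℝ,
        (∀ j, (g j).totalDegree = k) ∧ F = ∑ j : Fin l, (g j)^2) ∧
    (∀ x : Fin l → ℝ, 0 ≤ MvPolynomial.eval x F) ∧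
    {x : Fin l → ℝ | MvPolynomial.eval x F = 0}
      = {x : Fin l → ℝ | ∀ j, ∃ m : ℕ, 1 ≤ m ∧ m ≤ k ∧ x j = (m : ℝ)} ∧
    {x : Fin l → ℝ | MvPolynomial.eval x F = 0}.Finite ∧
    {x : Fin l → ℝ | MvPolynomial.eval x F = 0}.ncard = k ^ l ∧
    (∀ x₀ : Fin l → ℝ, MvPolynomial.eval x₀ F = 0 →
      nhdsWithin x₀ ({x : Fin l → ℝ | MvPolynomial.eval x F = 0} \ {x₀}) = ⊥) :=
  sos_with_kl_isolated_zeros_general l k F hF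
end

section
/- Hermite–Biehler, one direction: if p and q are real polynomials of degrees k and k−1 respectively, both with all real simple roots that strictly interlace (between any two consecutive roots of p lies exactly one root of q), q has negative leading coefficient and p is monic, then every complex root of s = p + iq lies in the open upper half-plane. -/
/-! By partial fractions, `q(z) / p(z) = ∑ rᵢ / (z - aᵢ)` with `rᵢ = q(aᵢ) / p'(aᵢ)`
(`nodalWeight univ a i = 1 / p'(aᵢ)`). Interlacing gives `q(aᵢ)` and `p'(aᵢ)` the same number
`k - 1 - i` of negative factors, so `rᵢ` has the sign of `c < 0`. At a root `z` of `p + Iq` the sum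
equals `I`, while `Im (rᵢ / (z - aᵢ)) = -rᵢ Im z / |z - aᵢ|²` has the sign of `Im z`. -/

open Polynomial Finset Lagrange

lemma neg_one_pow_card_mul_prod_sub_pos {ι : Type*} (s : Finset ι) (f : ι → ℝ) {x : ℝ}
    (hf : ∀ i ∈ s, f i ≠ x) :
    0 < (-1) ^ #{i ∈ s | ¬ f i < x} * ∏ i ∈ s, (x - f i) := by
  rw [← prod_filter_mul_prod_filter_not s (fun i => f i < x), mul_left_comm, ← prod_neg]
  refine mul_pos (prod_pos fun i hi => sub_pos.2 (mem_filter.1 hi).2) (prod_pos fun i hi => ?_)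
  obtain ⟨his, hi⟩ := mem_filter.1 hi
  exact neg_pos.2 (sub_neg.2 ((not_lt.1 hi).lt_of_ne' (hf i his)))

lemma prod_sub_div_prod_sub_pos {ι κ : Type*} (s : Finset ι) (t : Finset κ) (f : ι → ℝ)
    (g : κ → ℝ) {x : ℝ} (hf : ∀ i ∈ s, f i ≠ x) (hg : ∀ j ∈ t, g j ≠ x) (hcard : #s = #t)
    (hlt : #{i ∈ s | f i < x} = #{j ∈ t | g j < x}) :
    0 < (∏ i ∈ s, (x - f i)) / ∏ j ∈ t, (x - g j) := by
  have hs := card_filter_add_card_filter_not (s := s) (fun i => f i < x)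
  have ht := card_filter_add_card_filter_not (s := t) (fun j => g j < x)
  have hge : #{i ∈ s | ¬ f i < x} = #{j ∈ t | ¬ g j < x} := by omega
  have hft := neg_one_pow_card_mul_prod_sub_pos t g hg
  rw [← hge] at hft
  rw [← mul_div_mul_left _ _ (pow_ne_zero #{i ∈ s | ¬ f i < x} (neg_ne_zero.2 one_ne_zero))]
  exact div_pos (neg_one_pow_card_mul_prod_sub_pos s f hf) hft

def StrictlyInterlaces {k : ℕ} (a : Fin k → ℝ) (b : Fin (k - 1) → ℝ) : Prop :=
  ∀ m : Fin (k - 1), a (Fin.castLE (Nat.sub_le k 1) m) < b m ∧ b m < a ⟨m + 1, by omega⟩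

namespace StrictlyInterlaces

variable {k : ℕ} {a : Fin k → ℝ} {b : Fin (k - 1) → ℝ} (h : StrictlyInterlaces a b)
  (ha : StrictMono a) {m : Fin (k - 1)} {i : Fin k}
include h ha

lemma lt_of_val_lt (hmi : (m : ℕ) < i) : b m < a i :=
  (h m).2.trans_le (ha.monotone (Fin.le_def.2 (by simp only; omega)))

lemma lt_of_val_le (hmi : (i : ℕ) ≤ m) : a i < b m :=
  (ha.monotone (Fin.le_def.2 (by simpa using hmi))).trans_lt (h m).1

lemma lt_iff_val_lt : b m < a i ↔ (m : ℕ) < i :=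
  ⟨fun hlt => not_le.1 fun hle => (h.lt_of_val_le ha hle).asymm hlt, h.lt_of_val_lt ha⟩

lemma ne : b m ≠ a i := by
  rcases lt_or_ge (m : ℕ) i with hmi | hmi
  · exact (h.lt_of_val_lt ha hmi).ne
  · exact (h.lt_of_val_le ha hmi).ne'

lemma nodalWeight_mul_eval_neg {c : ℝ} (hc : c < 0) (i : Fin k) :
    nodalWeight univ a i * eval (a i) (C c * ∏ m, (X - C (b m))) < 0 := by
  have hbelow_b : #{m | b m < a i} = i := by
    simp only [h.lt_iff_val_lt ha, Fin.card_filter_val_lt]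
    omega
  have hbelow_a : #{j ∈ univ.erase i | a j < a i} = i := by
    rw [← Fin.card_Iio i]
    congr 1
    ext j
    simp only [mem_filter, mem_erase, mem_univ, mem_Iio, ha.lt_iff_lt]
    exact ⟨fun hj => hj.2, fun hj => ⟨⟨hj.ne, trivial⟩, hj⟩⟩
  have hpos := prod_sub_div_prod_sub_pos _ _ _ _ (fun m _ => h.ne ha)
    (fun j hj hji => (mem_erase.1 hj).1 (ha.injective hji)) (by simp)
    (hbelow_b.trans hbelow_a.symm)
  rw [nodalWeight, prod_inv_distrib, eval_mul, eval_C, eval_prod]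
  simp only [eval_sub, eval_X, eval_C]
  calc _ = c * ((∏ m, (a i - b m)) / ∏ j ∈ univ.erase i, (a i - a j)) := by ring
    _ < 0 := mul_neg_of_neg_of_pos hc hpos

end StrictlyInterlaces

theorem aeval_eq_aeval_nodal_mul_sum {ι K L : Type*} [Field K] [Field L] [Algebra K L]
    [DecidableEq ι] {s : Finset ι} {v : ι → K} (hvs : Set.InjOn v s) {q : K[X]}
    (hq : q.degree < #s) {z : L} (hz : ∀ i ∈ s, z ≠ algebraMap K L (v i)) :
    aeval z q = aeval z (nodal s v) *
      ∑ i ∈ s, algebraMap K L (nodalWeight s v i * q.eval (v i)) / (z - algebraMap K L (v i)) := by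
  have hinj : Set.InjOn (algebraMap K L ∘ v) s := (algebraMap K L).injective.comp_injOn hvs
  rw [aeval_def, ← eval_map, eq_interpolate hinj ((degree_map _ _).trans_lt hq),
    eval_interpolate_not_at_node (v := algebraMap K L ∘ v) _ hz]
  congr 1
  · simp only [nodal, Function.comp_apply, eval_prod, eval_sub, eval_X, eval_C, map_prod,
      aeval_sub, aeval_X, aeval_C]
  · refine sum_congr rfl fun i _ => ?_
    simp only [nodalWeight, Function.comp_apply, prod_inv_distrib, eval_map_algebraMap,
      aeval_algebraMap_apply_eq_algebraMap_eval, map_mul, map_inv₀, map_prod, map_sub,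
      div_eq_mul_inv]
    ring

lemma Complex.im_pos_of_im_sum_div_sub_pos {ι : Type*} (s : Finset ι) {r x : ι → ℝ}
    (hr : ∀ i ∈ s, r i ≤ 0) {z : ℂ} (h : 0 < (∑ i ∈ s, (r i : ℂ) / (z - x i)).im) : 0 < z.im := by
  by_contra! hz
  refine h.not_ge ?_
  rw [Complex.im_sum]
  refine sum_nonpos fun i hi => ?_
  simp only [Complex.div_im, Complex.ofReal_im, Complex.ofReal_re, Complex.sub_re, Complex.sub_im,
    zero_mul, zero_div, sub_zero, zero_sub, Left.neg_nonpos_iff]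
  exact div_nonneg (mul_nonneg_of_nonpos_of_nonpos (hr i hi) hz) (Complex.normSq_nonneg _)

theorem sum_nodalWeight_mul_eval_div_sub_eq_I {ι : Type*} [Fintype ι] [DecidableEq ι]
    {a : ι → ℝ} (ha : Function.Injective a) {q : ℝ[X]} (hq : q.degree < Fintype.card ι)
    (hqa : ∀ i, q.eval (a i) ≠ 0) {z : ℂ}
    (hz : aeval z (nodal univ a) + Complex.I * aeval z q = 0) :
    ∑ i, ((nodalWeight univ a i * q.eval (a i) : ℝ) : ℂ) / (z - a i) = Complex.I := by
  have hnode : ∀ i ∈ univ, z ≠ algebraMap ℝ ℂ (a i) := by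
    rintro i - rfl
    rw [aeval_algebraMap_apply_eq_algebraMap_eval, eval_nodal_at_node (mem_univ i), map_zero,
      zero_add, aeval_algebraMap_apply_eq_algebraMap_eval] at hz
    exact hqa i (by simpa using hz)
  have hp0 : aeval z (nodal univ a) ≠ 0 := by
    simp only [nodal, map_prod, aeval_sub, aeval_X, aeval_C]
    exact prod_ne_zero_iff.2 fun i hi => sub_ne_zero.2 (hnode i hi)
  have hpf := aeval_eq_aeval_nodal_mul_sum ha.injOn (by rwa [card_univ]) hnode
  simp only [Complex.coe_algebraMap] at hpf
  set S := ∑ i, ((nodalWeight univ a i * q.eval (a i) : ℝ) : ℂ) / (z - a i)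
  rw [hpf] at hz
  have h1 : 1 + Complex.I * S = 0 := (mul_eq_zero.1
    (by linear_combination hz : aeval z (nodal univ a) * (1 + Complex.I * S) = 0)).resolve_left hp0
  linear_combination (-Complex.I) * h1 + S * Complex.I_sq

theorem hermite_biehler_forward_general (k : ℕ) (hk : 1 ≤ k)
    (a : Fin k → ℝ) (ha : StrictMono a)
    (b : Fin (k - 1) → ℝ)
    (c : ℝ) (hc : c < 0)
    (p q : ℝ[X])
    (hp : p = ∏ i : Fin k, (X - C (a i)))
    (hq : q = C c * ∏ i : Fin (k - 1), (X - C (b i)))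
    (hinter : ∀ i : Fin (k - 1),
      a (Fin.castLE (Nat.sub_le k 1) i) < b i ∧ b i < a (Fin.cast (Nat.succ_pred_eq_of_pos hk) i.succ)) :
    ∀ z : ℂ, Polynomial.aeval z p + Complex.I * Polynomial.aeval z q = 0 → 0 < z.im := by
  intro z hz
  subst hp hq
  have hweight := StrictlyInterlaces.nodalWeight_mul_eval_neg hinter ha hc
  have hdeg : (C c * ∏ i, (X - C (b i))).degree < Fintype.card (Fin k) := by
    rw [degree_C_mul hc.ne, ← nodal_eq, degree_nodal, card_univ, Fintype.card_fin,
      Fintype.card_fin, Nat.cast_lt]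
    omega
  have hS := sum_nodalWeight_mul_eval_div_sub_eq_I ha.injective hdeg
    (fun i => right_ne_zero_of_mul (hweight i).ne) hz
  refine Complex.im_pos_of_im_sum_div_sub_pos univ (x := a) (fun i _ => (hweight i).le) ?_
  rw [hS, Complex.I_im]
  exact one_pos

/-- Hermite–Biehler, one direction: if `p` is monic of degree `k` with simple real roots
`a₁ < ⋯ < a_k`, `q` has degree `k-1` with negative leading coefficient and simple real
roots `b₁ < ⋯ < b_{k-1}` strictly interlacing those of `p`, then every complex root of
`s = p + iq` lies in the open upper half-plane. -/
theorem hermite_biehler_forward (k : ℕ) (hk : 1 ≤ k)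
    (a : Fin k → ℝ) (ha : StrictMono a)
    (b : Fin (k - 1) → ℝ) (hb : StrictMono b)
    (c : ℝ) (hc : c < 0)
    (p q : ℝ[X])
    (hp : p = ∏ i : Fin k, (X - C (a i)))
    (hq : q = C c * ∏ i : Fin (k - 1), (X - C (b i)))
    (hinter : ∀ i : Fin (k - 1),
      a (Fin.castLE (Nat.sub_le k 1) i) < b i ∧ b i < a (Fin.cast (Nat.succ_pred_eq_of_pos hk) i.succ)) :
    ∀ z : ℂ, Polynomial.aeval z p + Complex.I * Polynomial.aeval z q = 0 → 0 < z.im :=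
  hermite_biehler_forward_general k hk a ha b c hc p q hp hq hinter
end

section
/- For a real polynomial p with all roots real, between any two consecutive distinct real roots of p there is exactly one root of p' (counted without multiplicity among the points that are not roots of p), and all roots of p' are real. -/
/-!
Reality of the roots of `p'` is Gauss–Lucas: they lie in the convex hull of the roots of `p`,
which is contained in the real axis. For the interlacing, `p` splits over `ℝ`, so away from its
roots `p'/p = ∑ 1 / (x - r)`, summed over the roots `r` of `p` with multiplicity. Each summand is
strictly decreasing on a gap `(a, b)` between consecutive roots, hence so is `p'/p`, and `p'` has
at most one zero there; Rolle's theorem provides one.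
-/

open Polynomial

namespace Polynomial

theorem splits_of_forall_aeval_complex_eq_zero_im_eq_zero {p : ℝ[X]}
    (hreal : ∀ z : ℂ, aeval z p = 0 → z.im = 0) : p.Splits := by
  refine Splits.of_splits_map (algebraMap ℝ ℂ) (IsAlgClosed.splits _) fun z hz => ?_
  have him : z.im = 0 := hreal z (by
    rw [← aeval_map_algebraMap ℂ]
    exact (mem_roots'.mp hz).2)
  exact ⟨z.re, Complex.ext rfl him.symm⟩

theorem im_eq_zero_of_aeval_derivative_eq_zero {p : ℝ[X]} (hdeg : 0 < p.natDegree)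
    (hreal : ∀ z : ℂ, aeval z p = 0 → z.im = 0) {z : ℂ}
    (hz : aeval z (derivative p) = 0) : z.im = 0 := by
  set P := p.map (algebraMap ℝ ℂ)
  have hP : 0 < P.degree := by
    rw [degree_map]
    exact natDegree_pos_iff_degree_pos.mp hdeg
  have hzP : z ∈ P.derivative.rootSet ℂ := by
    rw [mem_rootSet, derivative_map, aeval_map_algebraMap]
    refine ⟨?_, hz⟩
    rw [Ne, Polynomial.map_eq_zero_iff (algebraMap ℝ ℂ).injective, derivative_eq_zero]
    exact hdeg.ne'
  have hroots : P.rootSet ℂ ⊆ {w : ℂ | w.im = 0} := fun w hw =>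
    hreal w (by simpa [P, aeval_map_algebraMap] using (mem_rootSet.mp hw).2)
  exact convexHull_min hroots (LinearMap.ker Complex.imLm).convex
    (rootSet_derivative_subset_convexHull_rootSet hP hzP)

theorem one_div_sub_lt_one_div_sub {a b r x y : ℝ} (hr : r ∉ Set.Ioo a b)
    (hx : x ∈ Set.Ioo a b) (hy : y ∈ Set.Ioo a b) (hxy : x < y) :
    1 / (y - r) < 1 / (x - r) := by
  rcases le_or_gt r a with hra | har
  · exact one_div_lt_one_div_of_lt (by linarith [hx.1]) (by linarith)
  · have hbr : b ≤ r := le_of_not_gt fun hrb => hr ⟨har, hrb⟩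
    exact one_div_lt_one_div_of_neg_of_lt (by linarith [hy.2]) (by linarith)

theorem strictAntiOn_sum_one_div_sub {s : Multiset ℝ} (hs : s ≠ 0) {a b : ℝ}
    (hgap : ∀ r ∈ s, r ∉ Set.Ioo a b) :
    StrictAntiOn (fun x => (s.map fun r => 1 / (x - r)).sum) (Set.Ioo a b) :=
  fun _ hx _ hy hxy => Multiset.sum_lt_sum_of_nonempty hs fun r hr =>
    one_div_sub_lt_one_div_sub (hgap r hr) hx hy hxy

theorem Splits.eq_of_isRoot_derivative_of_mem_Ioo {p : ℝ[X]} (hsplit : p.Splits)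
    (hdeg : 0 < p.natDegree) {a b : ℝ} (hgap : ∀ x ∈ Set.Ioo a b, ¬ p.IsRoot x) {x y : ℝ}
    (hx : x ∈ Set.Ioo a b) (hy : y ∈ Set.Ioo a b) (hx' : (derivative p).IsRoot x)
    (hy' : (derivative p).IsRoot y) : x = y := by
  have hp : p ≠ 0 := ne_zero_of_natDegree_gt hdeg
  have hlogDeriv_eq_zero {t : ℝ} (ht : t ∈ Set.Ioo a b) (ht' : (derivative p).IsRoot t) :
      (p.roots.map fun r => 1 / (t - r)).sum = 0 := by
    have := hsplit.eval_derivative_eq_eval_mul_sum (hgap t ht)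
    rw [ht'.eq_zero, eq_comm, mul_eq_zero] at this
    exact this.resolve_left (hgap t ht)
  refine (strictAntiOn_sum_one_div_sub (hsplit.roots_ne_zero hdeg.ne') ?_).injOn hx hy
    ((hlogDeriv_eq_zero hx hx').trans (hlogDeriv_eq_zero hy hy').symm)
  exact fun r hr hrab => hgap r hrab ((mem_roots hp).mp hr)

end Polynomial

/-- For a real polynomial `p` of degree ≥ 2 with all complex roots real: every complex
root of `p'` is real, and between any two consecutive real roots of `p` there is exactly
one root of `p'`. -/
theorem rolle_for_real_rooted (p : ℝ[X]) (hdeg : 2 ≤ p.natDegree)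
    (hreal : ∀ z : ℂ, Polynomial.aeval z p = 0 → z.im = 0) :
    (∀ z : ℂ, Polynomial.aeval z (derivative p) = 0 → z.im = 0) ∧
    (∀ a b : ℝ, a < b → p.IsRoot a → p.IsRoot b →
      (∀ x ∈ Set.Ioo a b, ¬ p.IsRoot x) →
      ∃! x : ℝ, x ∈ Set.Ioo a b ∧ (derivative p).IsRoot x) := by
  have hdeg_pos : 0 < p.natDegree := by omega
  refine ⟨fun z => im_eq_zero_of_aeval_derivative_eq_zero hdeg_pos hreal,
    fun a b hab ha hb hgap => ?_⟩
  obtain ⟨c, hc, hc'⟩ := exists_deriv_eq_zero hab p.continuousOn (ha.trans hb.symm)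
  rw [p.deriv] at hc'
  exact ⟨c, ⟨hc, hc'⟩, fun y ⟨hy, hy'⟩ =>
    (splits_of_forall_aeval_complex_eq_zero_im_eq_zero hreal).eq_of_isRoot_derivative_of_mem_Ioo
      hdeg_pos hgap hy hc hy' hc'⟩
end
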